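/- arXiv:1710.01987 — 3 statements merged into one kernel-verified Lean document; each statement's English description precedes it below -/
import Mathlib

section
/- Let G be the group with presentation ⟨a, b | (ba)^{v+1}·a·(ba)^{-(v+1)}·b^{-(u+1)}·(ba)^{-v}·a·(ba)^{v}·b^{u}⟩ for natural number v and integer u. Then G is isomorphic to the group with presentation ⟨g, h | g²·(h^{-v}g)^u·g·h^{-(v+1)}·(h^{-v}g)^{-u}·h^{-(2v+1)}⟩, via the map sending h ↦ ba and g ↦ (ba)^v·b. -/
/-- The relator of the presentation on generators `a = of 0`, `b = of 1`:
`(ba)^{v+1}·a·(ba)^{-(v+1)}·b^{-(u+1)}·(ba)^{-v}·a·(ba)^{v}·b^{u}`. -/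
def relAB (v : ℕ) (u : ℤ) : FreeGroup (Fin 2) :=
  let a := FreeGroup.of (0 : Fin 2); let b := FreeGroup.of (1 : Fin 2)
  (b * a) ^ (v + 1) * a * ((b * a) ^ (v + 1))⁻¹ * (b ^ (u + 1))⁻¹ *
    ((b * a) ^ v)⁻¹ * a * (b * a) ^ v * b ^ u

/-- The relator of the presentation on generators `g = of 0`, `h = of 1`:
`g²·(h^{-v}g)^u·g·h^{-(v+1)}·(h^{-v}g)^{-u}·h^{-(2v+1)}`. -/
def relGH (v : ℕ) (u : ℤ) : FreeGroup (Fin 2) :=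
  let g := FreeGroup.of (0 : Fin 2); let h := FreeGroup.of (1 : Fin 2)
  g ^ 2 * ((h ^ v)⁻¹ * g) ^ u * g * (h ^ (v + 1))⁻¹ * (((h ^ v)⁻¹ * g) ^ u)⁻¹ *
    (h ^ (2 * v + 1))⁻¹

private lemma id1 (G : Type*) [Group G] (g h : G) (v : ℕ) (u : ℤ) :
    ((((h^v)⁻¹*g) * (g⁻¹*h^(v+1)))^(v+1) * (g⁻¹*h^(v+1)) * (((((h^v)⁻¹*g) * (g⁻¹*h^(v+1)))^(v+1)))⁻¹
      * ((((h^v)⁻¹*g))^(u+1))⁻¹ * ((((h^v)⁻¹*g) * (g⁻¹*h^(v+1)))^v)⁻¹ * (g⁻¹*h^(v+1))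
      * (((h^v)⁻¹*g) * (g⁻¹*h^(v+1)))^v * (((h^v)⁻¹*g))^u)
    = (h^(2*v+1) * ((h^v)⁻¹*g)^u)⁻¹ *
      (g ^ 2 * ((h ^ v)⁻¹ * g) ^ u * g * (h ^ (v + 1))⁻¹ * (((h ^ v)⁻¹ * g) ^ u)⁻¹ *
        (h ^ (2 * v + 1))⁻¹)⁻¹ * (h^(2*v+1) * ((h^v)⁻¹*g)^u) := by
  rw [add_comm u 1, zpow_one_add]
  generalize ((h^v)⁻¹*g)^u = t
  group

private lemma id2 (G : Type*) [Group G] (b c : G) (v : ℕ) (u : ℤ) :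
    ((c^v*b)^2 * ((c^v)⁻¹*(c^v*b))^u * (c^v*b) * (c^(v+1))⁻¹
      * (((c^v)⁻¹*(c^v*b))^u)⁻¹ * (c^(2*v+1))⁻¹)
    = (c^(2*v+1) * b^u) *
      (c ^ (v + 1) * (b⁻¹*c) * (c ^ (v + 1))⁻¹ * (b ^ (u + 1))⁻¹ *
        (c ^ v)⁻¹ * (b⁻¹*c) * c ^ v * b ^ u)⁻¹ * (c^(2*v+1) * b^u)⁻¹ := by
  rw [sq]
  group

private lemma keyAB (G : Type*) [Group G] (a b : G) (v : ℕ) (u : ℤ)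
    (hrel : (b*a)^(v+1) * a * ((b*a)^(v+1))⁻¹ * (b^(u+1))⁻¹ * ((b*a)^v)⁻¹ * a * (b*a)^v * b^u = 1) :
    ((b*a)^v*b)^2 * (((b*a)^v)⁻¹*((b*a)^v*b))^u * ((b*a)^v*b) * ((b*a)^(v+1))⁻¹
      * ((((b*a)^v)⁻¹*((b*a)^v*b))^u)⁻¹ * ((b*a)^(2*v+1))⁻¹ = 1 := by
  have h0 : b⁻¹*(b*a) = a := by group
  have h2 := id2 G b (b*a) v u
  rw [h0] at h2
  rw [h2, hrel]
  group

private lemma keyGH (G : Type*) [Group G] (g h : G) (v : ℕ) (u : ℤ)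
    (hrel : g ^ 2 * ((h ^ v)⁻¹ * g) ^ u * g * (h ^ (v + 1))⁻¹ * (((h ^ v)⁻¹ * g) ^ u)⁻¹ *
        (h ^ (2 * v + 1))⁻¹ = 1) :
    ((((h^v)⁻¹*g) * (g⁻¹*h^(v+1)))^(v+1) * (g⁻¹*h^(v+1)) * (((((h^v)⁻¹*g) * (g⁻¹*h^(v+1)))^(v+1)))⁻¹
      * ((((h^v)⁻¹*g))^(u+1))⁻¹ * ((((h^v)⁻¹*g) * (g⁻¹*h^(v+1)))^v)⁻¹ * (g⁻¹*h^(v+1))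
      * (((h^v)⁻¹*g) * (g⁻¹*h^(v+1)))^v * (((h^v)⁻¹*g))^u) = 1 := by
  rw [id1 G g h v u, hrel]
  group


private def fA (v : ℕ) (u : ℤ) : Fin 2 → PresentedGroup ({relAB v u} : Set (FreeGroup (Fin 2))) :=
  ![(PresentedGroup.of 1 * PresentedGroup.of 0)^v * PresentedGroup.of 1,
    PresentedGroup.of 1 * PresentedGroup.of 0]

private def fG (v : ℕ) (u : ℤ) : Fin 2 → PresentedGroup ({relGH v u} : Set (FreeGroup (Fin 2))) :=
  ![(PresentedGroup.of 0)⁻¹ * (PresentedGroup.of 1)^(v+1),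
    ((PresentedGroup.of 1)^v)⁻¹ * PresentedGroup.of 0]

private lemma hrelA (v : ℕ) (u : ℤ) :
    ((PresentedGroup.of 1 * PresentedGroup.of 0 : PresentedGroup ({relAB v u} : Set (FreeGroup (Fin 2)))))^(v+1) * PresentedGroup.of 0 *
      ((PresentedGroup.of 1 * PresentedGroup.of 0 : PresentedGroup ({relAB v u} : Set (FreeGroup (Fin 2))))^(v+1))⁻¹ *
      ((PresentedGroup.of 1 : PresentedGroup ({relAB v u} : Set (FreeGroup (Fin 2))))^(u+1))⁻¹ *
      ((PresentedGroup.of 1 * PresentedGroup.of 0 : PresentedGroup ({relAB v u} : Set (FreeGroup (Fin 2))))^v)⁻¹ * PresentedGroup.of 0 *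
      (PresentedGroup.of 1 * PresentedGroup.of 0 : PresentedGroup ({relAB v u} : Set (FreeGroup (Fin 2))))^v *
      (PresentedGroup.of 1 : PresentedGroup ({relAB v u} : Set (FreeGroup (Fin 2))))^u = 1 := by
  have h : PresentedGroup.mk ({relAB v u} : Set (FreeGroup (Fin 2))) (relAB v u) = 1 :=
    (QuotientGroup.eq_one_iff (relAB v u)).mpr
      (Subgroup.subset_normalClosure (Set.mem_singleton _))
  have hof : ∀ x : Fin 2, PresentedGroup.mk ({relAB v u} : Set (FreeGroup (Fin 2)))
      (FreeGroup.of x) = PresentedGroup.of x := fun _ => rfl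
  simp only [relAB, map_mul, map_inv, map_pow, map_zpow, hof] at h
  exact h

private lemma hrelG (v : ℕ) (u : ℤ) :
    (PresentedGroup.of 0 : PresentedGroup ({relGH v u} : Set (FreeGroup (Fin 2)))) ^ 2 *
      (((PresentedGroup.of 1 : PresentedGroup ({relGH v u} : Set (FreeGroup (Fin 2)))) ^ v)⁻¹ * PresentedGroup.of 0) ^ u * PresentedGroup.of 0 *
      ((PresentedGroup.of 1 : PresentedGroup ({relGH v u} : Set (FreeGroup (Fin 2)))) ^ (v + 1))⁻¹ *
      ((((PresentedGroup.of 1 : PresentedGroup ({relGH v u} : Set (FreeGroup (Fin 2)))) ^ v)⁻¹ * PresentedGroup.of 0) ^ u)⁻¹ *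
      ((PresentedGroup.of 1 : PresentedGroup ({relGH v u} : Set (FreeGroup (Fin 2)))) ^ (2 * v + 1))⁻¹ = 1 := by
  have h : PresentedGroup.mk ({relGH v u} : Set (FreeGroup (Fin 2))) (relGH v u) = 1 :=
    (QuotientGroup.eq_one_iff (relGH v u)).mpr
      (Subgroup.subset_normalClosure (Set.mem_singleton _))
  have hof : ∀ x : Fin 2, PresentedGroup.mk ({relGH v u} : Set (FreeGroup (Fin 2)))
      (FreeGroup.of x) = PresentedGroup.of x := fun _ => rfl
  simp only [relGH, map_mul, map_inv, map_pow, map_zpow, hof] at h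
  exact h

private lemma hphi (v : ℕ) (u : ℤ) :
    ∀ r ∈ ({relGH v u} : Set (FreeGroup (Fin 2))), FreeGroup.lift (fA v u) r = 1 := by
  intro r hr
  rw [Set.mem_singleton_iff] at hr
  subst hr
  simp only [relGH, map_mul, map_inv, map_pow, map_zpow, FreeGroup.lift_apply_of, fA,
    Matrix.cons_val_zero, Matrix.cons_val_one, Matrix.head_cons]
  exact keyAB _ (PresentedGroup.of 0) (PresentedGroup.of 1) v u (hrelA v u)

private lemma hpsi (v : ℕ) (u : ℤ) :
    ∀ r ∈ ({relAB v u} : Set (FreeGroup (Fin 2))), FreeGroup.lift (fG v u) r = 1 := by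
  intro r hr
  rw [Set.mem_singleton_iff] at hr
  subst hr
  simp only [relAB, map_mul, map_inv, map_pow, map_zpow, FreeGroup.lift_apply_of, fG,
    Matrix.cons_val_zero, Matrix.cons_val_one, Matrix.head_cons]
  exact keyGH _ (PresentedGroup.of 0) (PresentedGroup.of 1) v u (hrelG v u)

private def phi (v : ℕ) (u : ℤ) :
    PresentedGroup ({relGH v u} : Set (FreeGroup (Fin 2))) →*
      PresentedGroup ({relAB v u} : Set (FreeGroup (Fin 2))) :=
  PresentedGroup.toGroup (hphi v u)

private def psi (v : ℕ) (u : ℤ) :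
    PresentedGroup ({relAB v u} : Set (FreeGroup (Fin 2))) →*
      PresentedGroup ({relGH v u} : Set (FreeGroup (Fin 2))) :=
  PresentedGroup.toGroup (hpsi v u)

private lemma phi_of (v : ℕ) (u : ℤ) (x : Fin 2) :
    phi v u (PresentedGroup.of x) = fA v u x := PresentedGroup.toGroup.of _

private lemma psi_of (v : ℕ) (u : ℤ) (x : Fin 2) :
    psi v u (PresentedGroup.of x) = fG v u x := PresentedGroup.toGroup.of _

theorem stmt_8 (v : ℕ) (u : ℤ) :
    ∃ e : PresentedGroup ({relGH v u} : Set (FreeGroup (Fin 2))) ≃*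
        PresentedGroup ({relAB v u} : Set (FreeGroup (Fin 2))),
      e (PresentedGroup.of 1) = PresentedGroup.of 1 * PresentedGroup.of 0 ∧
      e (PresentedGroup.of 0) =
        (PresentedGroup.of 1 * PresentedGroup.of 0) ^ v * PresentedGroup.of 1 := by
  have h1 : (psi v u).comp (phi v u) = MonoidHom.id _ := by
    apply PresentedGroup.ext
    intro x
    fin_cases x <;>
      simp only [MonoidHom.comp_apply, MonoidHom.id_apply, phi_of, psi_of, fA, fG,
        map_mul, map_pow, map_inv, map_zpow, Fin.zero_eta, Fin.mk_one, Fin.isValue,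
        Matrix.cons_val_zero, Matrix.cons_val_one, Matrix.head_cons] <;> group
  have h2 : (phi v u).comp (psi v u) = MonoidHom.id _ := by
    apply PresentedGroup.ext
    intro x
    fin_cases x <;>
      simp only [MonoidHom.comp_apply, MonoidHom.id_apply, phi_of, psi_of, fA, fG,
        map_mul, map_pow, map_inv, map_zpow, Fin.zero_eta, Fin.mk_one, Fin.isValue,
        Matrix.cons_val_zero, Matrix.cons_val_one, Matrix.head_cons] <;> group
  refine ⟨MonoidHom.toMulEquiv (phi v u) (psi v u) h1 h2, ?_, ?_⟩
  · show phi v u (PresentedGroup.of 1) = _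
    rw [phi_of]
    simp [fA]
  · show phi v u (PresentedGroup.of 0) = _
    rw [phi_of]
    simp [fA]
end

section
/- In the free group on generators α, β, γ, ξ, ψ, the relators ξ⁻¹γ⁻¹β⁻¹α⁻¹ξαβγ and ξ⁻¹αξγ⁻¹ become trivial after substituting ξ = h^{v+1}, γ = g⁻¹h^{v+1}, α = h^{v+1}g⁻¹, β = g·h^{-2v-1}·g, ψ = (h^{-v}g)^u, where g, h generate a free group of rank 2, v is a natural number and u an integer. -/
theorem stmt_10 (v : ℕ) (u : ℤ)
    (φ : FreeGroup (Fin 5) →* FreeGroup (Fin 2))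
    (g h : FreeGroup (Fin 2)) (hg : g = FreeGroup.of 0) (hh : h = FreeGroup.of 1)
    -- images of α, β, γ, ξ, ψ (indexed 0,1,2,3,4)
    (hα : φ (FreeGroup.of 0) = h ^ (v + 1) * g⁻¹)
    (hβ : φ (FreeGroup.of 1) = g * (h ^ (2 * v + 1))⁻¹ * g)
    (hγ : φ (FreeGroup.of 2) = g⁻¹ * h ^ (v + 1))
    (hξ : φ (FreeGroup.of 3) = h ^ (v + 1))
    (hψ : φ (FreeGroup.of 4) = ((h ^ v)⁻¹ * g) ^ u) :
    φ ((FreeGroup.of 3)⁻¹ * (FreeGroup.of 2)⁻¹ * (FreeGroup.of 1)⁻¹ *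
        (FreeGroup.of 0)⁻¹ * FreeGroup.of 3 * FreeGroup.of 0 * FreeGroup.of 1 *
        FreeGroup.of 2) = 1 ∧
    φ ((FreeGroup.of 3)⁻¹ * FreeGroup.of 0 * FreeGroup.of 3 *
        (FreeGroup.of 2)⁻¹) = 1 := by
  constructor <;> simp only [map_mul, map_inv, hα, hβ, hγ, hξ] <;> group
end

section
/- The free group on any nonempty type of generators is left-orderable. -/
/-!
Magnus' argument. Encode noncommutative power series in variables `X a` (`a : α`) by their
coefficient functions on words, and let `FreeGroup α` act on them by left multiplication through
`a ↦ 1 + X a`. Every group element acts as the identity plus terms of strictly higher order, so it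
preserves the lexicographic order of coefficient functions taken along any well-order of words that
refines length. The orbit map `g ↦ g • 1` is injective: if `a₁ ^ e₁ ⋯ aₖ ^ eₖ` is a reduced syllable
decomposition of `g`, then among words without two equal adjacent letters and of length at least
`k`, the series `g • 1` has the single nonzero coefficient `e₁ ⋯ eₖ`, at the word `a₁ ⋯ aₖ`.
Pulling back the order of coefficient functions along this orbit map orders `FreeGroup α`.
-/

/-- A group is left-orderable if it admits a strict total order invariant under
left multiplication. -/
def IsLeftOrderable (G : Type*) [Group G] : Prop :=
  ∃ r : G → G → Prop, IsStrictTotalOrder G r ∧ ∀ f g h : G, r g h → r (f * g) (f * h)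

open Function

theorem IsLeftOrderable.of_injective {G X : Type*} [Group G] [LinearOrder X] (φ : G → X)
    (hφ : Injective φ) (hmul : ∀ f g h : G, φ g < φ h → φ (f * g) < φ (f * h)) :
    IsLeftOrderable G :=
  let _ : LinearOrder G := LinearOrder.lift' φ hφ
  ⟨(· < ·), inferInstance, hmul⟩

theorem List.exists_linearOrder_wellFoundedLT_monotone_length (α : Type*) :
    ∃ _ : LinearOrder (List α), WellFoundedLT (List α) ∧ Monotone (List.length : List α → ℕ) := by
  let key : List α ↪ ℕ × List α := ⟨fun w => (w.length, w), fun _ _ h => congrArg Prod.snd h⟩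
  have hwo : IsWellOrder (List α) (key ⁻¹'o Prod.Lex (· < ·) WellOrderingRel) :=
    (RelEmbedding.preimage key _).isWellOrder
  let _ := IsWellOrder.linearOrder (key ⁻¹'o Prod.Lex (· < ·) WellOrderingRel)
  refine ⟨inferInstance, ⟨hwo.wf⟩, fun v w hvw => ?_⟩
  rcases hvw.lt_or_eq with h | rfl
  · exact (Prod.lex_def.mp h).elim le_of_lt fun h => h.1.le
  · rfl

theorem freeGroupEquivCoprodI_symm_of {α : Type*} (i : α) (x : FreeGroup Unit) :
    freeGroupEquivCoprodI.symm (Monoid.CoprodI.of (i := i) x) =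
      FreeGroup.of i ^ FreeGroup.freeGroupUnitEquivInt x := by
  obtain ⟨e, rfl⟩ := FreeGroup.freeGroupUnitEquivInt.symm.surjective x
  simp only [freeGroupEquivCoprodI, MonoidHom.toMulEquiv_symm_apply, Monoid.CoprodI.lift_of,
    Equiv.apply_symm_apply]
  exact map_zpow _ (FreeGroup.of ()) e

namespace FreeGroup

section Unitriangular

variable {α R : Type*}

/-- `T - 1` strictly raises the order of a series, i.e. the length of its shortest support word. -/
def IsUnitriangular [Zero R] (T : (List α → R) → List α → R) : Prop :=
  ∀ (n : ℕ) (m : List α → R), (∀ w : List α, w.length < n → m w = 0) →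
    ∀ w : List α, w.length ≤ n → T m w = m w

theorem isUnitriangular_id [Zero R] : IsUnitriangular (id : (List α → R) → List α → R) :=
  fun _ _ _ _ _ => rfl

theorem IsUnitriangular.comp [Zero R] {S T : (List α → R) → List α → R}
    (hS : IsUnitriangular S) (hT : IsUnitriangular T) : IsUnitriangular (S ∘ T) := by
  intro n m hm w hw
  have hTm : ∀ v : List α, v.length < n → T m v = 0 := fun v hv => by
    rw [hT n m hm v hv.le, hm v hv]
  rw [comp_apply, hS n (T m) hTm w hw, hT n m hm w hw]

theorem IsUnitriangular.symm [Zero R] {e : (List α → R) ≃ (List α → R)}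
    (he : IsUnitriangular e) : IsUnitriangular e.symm := by
  intro n m hm
  have hlow : ∀ k ≤ n, ∀ w : List α, w.length < k → e.symm m w = 0 := by
    intro k
    induction k with
    | zero => intro _ w hw; omega
    | succ k ih =>
      intro hk w hw
      rw [← he k _ (ih (by omega)) w (by omega), e.apply_symm_apply]
      exact hm w (by omega)
  intro w hw
  rw [← he n _ (hlow n le_rfl) w hw, e.apply_symm_apply]

variable [LinearOrder (List α)]

theorem IsUnitriangular.toLex_pos [Zero R] [LT R] (hlen : Monotone (List.length : List α → ℕ))
    {T : (List α → R) → List α → R} (hT : IsUnitriangular T) {m : List α → R}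
    (hm : 0 < toLex m) : 0 < toLex (T m) := by
  obtain ⟨i, hbelow, hi⟩ := hm
  have hshort : ∀ w : List α, w.length < i.length → m w = 0 := fun w hw =>
    (hbelow w (lt_of_not_ge fun h => (hw.trans_le (hlen h)).false)).symm
  have hagree := hT i.length m hshort
  exact ⟨i, fun j hj => (hbelow j hj).trans (hagree j (hlen hj.le)).symm,
    by simpa only [Pi.toLex_apply, hagree i le_rfl] using hi⟩

theorem IsUnitriangular.toLex_lt_toLex [AddCommGroup R] [LinearOrder R] [IsOrderedAddMonoid R]
    [WellFoundedLT (List α)] (hlen : Monotone (List.length : List α → ℕ)) {F : Type*}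
    [FunLike F (List α → R) (List α → R)] [AddMonoidHomClass F (List α → R) (List α → R)] {T : F}
    (hT : IsUnitriangular T) {m m' : List α → R} (h : toLex m < toLex m') :
    toLex (T m) < toLex (T m') := by
  rw [← sub_pos] at h ⊢
  have hpos := hT.toLex_pos hlen (m := m' - m) h
  rwa [map_sub] at hpos

end Unitriangular

variable {α : Type*} [DecidableEq α]

/-- Left multiplication by `X a` on noncommutative power series, encoded as coefficient functions
`List α → ℤ` on words. -/
def mulX (a : α) : (List α → ℤ) →ₗ[ℤ] List α → ℤ :=
  LinearMap.pi fun w => match w with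
    | [] => 0
    | b :: v => if b = a then LinearMap.proj v else 0

@[simp] theorem mulX_nil (a : α) (m : List α → ℤ) : mulX a m [] = 0 := rfl

@[simp] theorem mulX_cons (a b : α) (m : List α → ℤ) (w : List α) :
    mulX a m (b :: w) = if b = a then m w else 0 := by
  simp only [mulX, LinearMap.pi_apply]
  split_ifs <;> rfl

def invOnePlusX (a : α) (m : List α → ℤ) : List α → ℤ
  | [] => m []
  | b :: w => m (b :: w) - if b = a then invOnePlusX a m w else 0

def onePlusX (a : α) : (List α → ℤ) ≃ₗ[ℤ] List α → ℤ where
  toFun m := m + mulX a m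
  map_add' m m' := by simp only [map_add]; abel
  map_smul' c m := by simp only [map_smul, smul_add, RingHom.id_apply]
  invFun := invOnePlusX a
  left_inv m := by
    funext w
    induction w with
    | nil => simp [invOnePlusX]
    | cons b w ih => simp [invOnePlusX, ih]
  right_inv m := by
    funext w
    cases w <;> simp [invOnePlusX]

theorem onePlusX_apply (a : α) (m : List α → ℤ) : onePlusX a m = m + mulX a m := rfl

def magnus : FreeGroup α →* (List α → ℤ) ≃ₗ[ℤ] List α → ℤ := FreeGroup.lift onePlusX

theorem isUnitriangular_onePlusX (a : α) : IsUnitriangular (onePlusX a) := by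
  intro n m hm w hw
  cases w with
  | nil => simp [onePlusX_apply]
  | cons b w =>
    simp only [onePlusX_apply, Pi.add_apply, mulX_cons, add_eq_left]
    split_ifs
    · exact hm w (by simp only [List.length_cons] at hw; omega)
    · rfl

theorem isUnitriangular_magnus (g : FreeGroup α) : IsUnitriangular (magnus g) := by
  induction g using FreeGroup.induction_on with
  | C1 => rw [_root_.map_one]; exact isUnitriangular_id
  | of a => rw [magnus, lift_apply_of]; exact isUnitriangular_onePlusX a
  | inv_of a _ =>
    rw [_root_.map_inv, magnus, lift_apply_of]
    exact (isUnitriangular_onePlusX a).symm (e := (onePlusX a).toEquiv)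
  | mul g h hg hh => rw [_root_.map_mul]; exact hg.comp hh

theorem onePlusX_apply_of_head?_ne {a : α} {w : List α} (hw : w.head? ≠ some a)
    (m : List α → ℤ) : onePlusX a m w = m w := by
  cases w with
  | nil => simp [onePlusX_apply]
  | cons b w => simp_all [onePlusX_apply]

theorem onePlusX_inv_apply_of_head?_ne {a : α} {w : List α} (hw : w.head? ≠ some a)
    (m : List α → ℤ) : (onePlusX a)⁻¹ m w = m w := by
  conv_rhs => rw [← (onePlusX a).apply_symm_apply m, onePlusX_apply_of_head?_ne hw]
  rfl

theorem onePlusX_apply_cons_self (a : α) (w : List α) (m : List α → ℤ) :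
    onePlusX a m (a :: w) = m (a :: w) + m w := by
  simp [onePlusX_apply]

theorem onePlusX_inv_apply_cons_self {a : α} {w : List α} (hw : w.head? ≠ some a)
    (m : List α → ℤ) : (onePlusX a)⁻¹ m (a :: w) = m (a :: w) - m w := by
  conv_rhs => rw [← (onePlusX a).apply_symm_apply m, onePlusX_apply_cons_self,
    onePlusX_apply_of_head?_ne hw]
  simp

theorem onePlusX_zpow_apply_of_head?_ne {a : α} {w : List α} (hw : w.head? ≠ some a) (e : ℤ)
    (m : List α → ℤ) : (onePlusX a ^ e) m w = m w := by
  induction e using Int.induction_on generalizing m with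
  | zero => rfl
  | succ n ih => rw [zpow_add_one, LinearEquiv.mul_apply, ih, onePlusX_apply_of_head?_ne hw]
  | pred n ih => rw [zpow_sub_one, LinearEquiv.mul_apply, ih, onePlusX_inv_apply_of_head?_ne hw]

theorem onePlusX_zpow_apply_cons_self {a : α} {w : List α} (hw : w.head? ≠ some a) (e : ℤ)
    (m : List α → ℤ) : (onePlusX a ^ e) m (a :: w) = m (a :: w) + e * m w := by
  induction e using Int.induction_on generalizing m with
  | zero => simp
  | succ n ih =>
    rw [zpow_add_one, LinearEquiv.mul_apply, ih, onePlusX_apply_cons_self,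
      onePlusX_apply_of_head?_ne hw]
    ring
  | pred n ih =>
    rw [zpow_sub_one, LinearEquiv.mul_apply, ih, onePlusX_inv_apply_cons_self hw,
      onePlusX_inv_apply_of_head?_ne hw]
    ring

theorem magnus_of_zpow (a : α) (e : ℤ) : magnus (of a ^ e) = onePlusX a ^ e := by
  rw [map_zpow, magnus, lift_apply_of]

open Monoid.CoprodI in
theorem magnus_apply_single_of_word (w : Word fun _ : α => FreeGroup Unit) :
    ∃ c : ℤ, c ≠ 0 ∧ ∀ v : List α, v.IsChain (· ≠ ·) → w.toList.length ≤ v.length →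
      magnus (freeGroupEquivCoprodI.symm w.prod) (Pi.single [] 1) v =
        if v = w.toList.map Sigma.fst then c else 0 := by
  induction w using Word.consRecOn with
  | empty =>
    refine ⟨1, one_ne_zero, fun v _ _ => ?_⟩
    simp [Pi.single_apply]
  | cons i x w hfst hx ih =>
    obtain ⟨c, hc, hw⟩ := ih
    have he : freeGroupUnitEquivInt x ≠ 0 := fun h =>
      hx (freeGroupUnitEquivInt.injective (h.trans rfl))
    refine ⟨freeGroupUnitEquivInt x * c, mul_ne_zero he hc, fun v hv hlen => ?_⟩
    rw [Word.prod_cons, _root_.map_mul, _root_.map_mul, freeGroupEquivCoprodI_symm_of,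
      magnus_of_zpow, LinearEquiv.mul_apply]
    rcases v with _ | ⟨b, v⟩
    · simp at hlen
    simp only [Word.cons_toList, List.length_cons, add_le_add_iff_right] at hlen
    have hlong : b :: v ≠ w.toList.map Sigma.fst := fun h => by
      have := congrArg List.length h
      simp only [List.length_cons, List.length_map] at this
      omega
    simp only [Word.cons_toList, List.map_cons, List.cons.injEq]
    by_cases hb : b = i
    · subst hb
      rw [onePlusX_zpow_apply_cons_self (fun h => hv.rel_head? h rfl),
        hw (b :: v) hv (Nat.le_succ_of_le hlen), if_neg hlong, hw v hv.tail hlen]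
      simp [mul_ite]
    · rw [onePlusX_zpow_apply_of_head?_ne (by simpa using hb), hw _ hv (Nat.le_succ_of_le hlen),
        if_neg hlong, if_neg (by tauto)]

theorem magnus_apply_single_ne_single {g : FreeGroup α} (hg : g ≠ 1) :
    magnus g (Pi.single [] 1) ≠ Pi.single [] 1 := by
  set w := Monoid.CoprodI.Word.equiv (freeGroupEquivCoprodI g)
  have hgw : freeGroupEquivCoprodI.symm w.prod = g := by
    change freeGroupEquivCoprodI.symm (Monoid.CoprodI.Word.equiv.symm w) = g
    rw [Equiv.symm_apply_apply, MulEquiv.symm_apply_apply]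
  have hne : w.toList.map Sigma.fst ≠ [] := by
    intro h
    apply hg
    rw [← hgw, show w = .empty from Monoid.CoprodI.Word.ext (List.map_eq_nil_iff.mp h)]
    simp
  obtain ⟨c, hc, hw⟩ := magnus_apply_single_of_word w
  intro h
  have hcoeff := hw _ ((List.isChain_map Sigma.fst).mpr w.chain_ne) (by simp)
  rw [hgw, h, if_pos rfl, Pi.single_apply, if_neg hne] at hcoeff
  exact hc hcoeff.symm

theorem magnus_apply_single_injective :
    Injective fun g : FreeGroup α => magnus g (Pi.single [] 1) := by
  intro g h hgh
  by_contra hne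
  apply magnus_apply_single_ne_single (g := h⁻¹ * g) (by rwa [ne_eq, inv_mul_eq_one, eq_comm])
  simp only at hgh
  rw [_root_.map_mul, _root_.map_inv, LinearEquiv.mul_apply, hgh, LinearEquiv.coe_inv,
    LinearEquiv.symm_apply_apply]

end FreeGroup

theorem stmt_14_general (α : Type*) : IsLeftOrderable (FreeGroup α) := by
  classical
  obtain ⟨_, _, hlen⟩ := List.exists_linearOrder_wellFoundedLT_monotone_length α
  refine IsLeftOrderable.of_injective (fun g => toLex (FreeGroup.magnus g (Pi.single [] 1)))
    (toLex.injective.comp FreeGroup.magnus_apply_single_injective) fun f g h hgh => ?_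
  rw [map_mul, map_mul, LinearEquiv.mul_apply, LinearEquiv.mul_apply]
  exact (FreeGroup.isUnitriangular_magnus f).toLex_lt_toLex hlen hgh

theorem stmt_14 (α : Type*) [Nonempty α] : IsLeftOrderable (FreeGroup α) :=
  stmt_14_general α
end
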